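/- Let p, q, r : [0,1] → ℝ² be affine (linear-in-time) motions of three points such that the displacement vectors p(1)-p(0), q(1)-q(0), r(1)-r(0) are all parallel to a common direction d (each point moves along direction d at constant, possibly different, speed). If p(0) is strictly to the right of the oriented line through q(0), r(0), and p(1) is strictly to the right of the oriented line through q(1), r(1), then for every t in [0,1], p(t) is strictly to the right of the oriented line through q(t), r(t). -/
import Mathlib


/-- Signed area test: `p` is strictly to the right of the oriented line through `q`, `r`
iff `det (r - q, p - q) < 0`. -/
def strictlyRight (p q r : ℝ × ℝ) : Prop :=
  (r.1 - q.1) * (p.2 - q.2) - (r.2 - q.2) * (p.1 - q.1) < 0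

theorem stmt_4 (p₀ p₁ q₀ q₁ r₀ r₁ d : ℝ × ℝ) (hd : d ≠ 0)
    (cp cq cr : ℝ)
    (hp : p₁ - p₀ = cp • d) (hq : q₁ - q₀ = cq • d) (hr : r₁ - r₀ = cr • d)
    (h0 : strictlyRight p₀ q₀ r₀) (h1 : strictlyRight p₁ q₁ r₁) :
    ∀ t ∈ Set.Icc (0 : ℝ) 1,
      strictlyRight ((1 - t) • p₀ + t • p₁) ((1 - t) • q₀ + t • q₁)
        ((1 - t) • r₀ + t • r₁) := by
  intro t ht
  obtain ⟨ht0, ht1⟩ := ht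
  have hp1 := congrArg Prod.fst hp
  have hp2 := congrArg Prod.snd hp
  have hq1 := congrArg Prod.fst hq
  have hq2 := congrArg Prod.snd hq
  have hr1 := congrArg Prod.fst hr
  have hr2 := congrArg Prod.snd hr
  simp only [Prod.fst_sub, Prod.snd_sub, Prod.smul_fst, Prod.smul_snd,
    smul_eq_mul] at hp1 hp2 hq1 hq2 hr1 hr2
  unfold strictlyRight at *
  simp only [Prod.fst_add, Prod.snd_add, Prod.smul_fst, Prod.smul_snd,
    smul_eq_mul] at *
  have key : ((1 - t) * r₀.1 + t * r₁.1 - ((1 - t) * q₀.1 + t * q₁.1)) *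
        ((1 - t) * p₀.2 + t * p₁.2 - ((1 - t) * q₀.2 + t * q₁.2)) -
      ((1 - t) * r₀.2 + t * r₁.2 - ((1 - t) * q₀.2 + t * q₁.2)) *
        ((1 - t) * p₀.1 + t * p₁.1 - ((1 - t) * q₀.1 + t * q₁.1)) =
      (1 - t) * ((r₀.1 - q₀.1) * (p₀.2 - q₀.2) - (r₀.2 - q₀.2) * (p₀.1 - q₀.1)) +
      t * ((r₁.1 - q₁.1) * (p₁.2 - q₁.2) - (r₁.2 - q₁.2) * (p₁.1 - q₁.1)) := by
    have ep1 : p₁.1 = p₀.1 + cp * d.1 := by linarith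
    have ep2 : p₁.2 = p₀.2 + cp * d.2 := by linarith
    have eq1 : q₁.1 = q₀.1 + cq * d.1 := by linarith
    have eq2 : q₁.2 = q₀.2 + cq * d.2 := by linarith
    have er1 : r₁.1 = r₀.1 + cr * d.1 := by linarith
    have er2 : r₁.2 = r₀.2 + cr * d.2 := by linarith
    rw [ep1, ep2, eq1, eq2, er1, er2]; ring
  rw [key]
  have gen : ∀ A B : ℝ, A < 0 → B < 0 → (1 - t) * A + t * B < 0 := by
    intro A B hA hB
    rcases le_total A B with h | h
    · nlinarith [mul_le_mul_of_nonneg_right ht1 (sub_nonneg.mpr h)]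
    · nlinarith [mul_nonneg ht0 (sub_nonneg.mpr h)]
  exact gen _ _ h0 h1
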